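/- arXiv:2209.15505 — 2 statements merged into one kernel-verified Lean document; each statement's English description precedes it below -/
import Mathlib

section
/- (Lemma: evolution of the auxiliary average z̄) For the Momentum Tracking iterates, for every round r ≥ 0 the auxiliary sequence z̄ satisfies z̄^{(r+1)} − z̄^{(r)} = −(η/(1−β)) · (1/N)∑_{i=1}^N ∇F_i(x_i^{(r)};ξ_i^{(r)}). -/
open MeasureTheory
open scoped BigOperators

noncomputable section

/-- Problem data and standing assumptions (lower bound, mixing, smoothness) for
decentralized optimization over `N` nodes in `ℝ^d`. -/
structure MTProblem (N d : ℕ) (Ω : Type) [mΩ : MeasurableSpace Ω] where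
  /-- Probability measure driving the stochastic gradients. -/
  μ : Measure Ω
  prob : IsProbabilityMeasure μ
  fstar : ℝ
  L : ℝ
  σ : ℝ
  p : ℝ
  β : ℝ
  /-- Local objectives `f_i`. -/
  f : Fin N → EuclideanSpace ℝ (Fin d) → ℝ
  /-- Local gradients `∇f_i`. -/
  g : Fin N → EuclideanSpace ℝ (Fin d) → EuclideanSpace ℝ (Fin d)
  /-- Mixing matrix. -/
  W : Fin N → Fin N → ℝ
  /-- Common initial parameter. -/
  x0 : EuclideanSpace ℝ (Fin d)
  hN : 0 < N
  hβ0 : 0 ≤ β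
  hβ1 : β < 1
  hL : 0 < L
  hp0 : 0 < p
  hp1 : p ≤ 1
  hgrad : ∀ i v, HasGradientAt (f i) (g i v) v
  /-- Lower bound: `f⋆ ≤ f(x)` for all `x`. -/
  hlb : ∀ v, fstar ≤ (N : ℝ)⁻¹ * ∑ i, f i v
  /-- `L`-smoothness of each `f_i`. -/
  hsmooth : ∀ i v w, ‖g i v - g i w‖ ≤ L * ‖v - w‖
  hWsymm : ∀ i j, W i j = W j i
  hWrow : ∀ i, ∑ j, W i j = 1
  hWcol : ∀ j, ∑ i, W i j = 1
  /-- Spectral gap: `‖XW − X̄‖_F² ≤ (1−p)‖X − X̄‖_F²`. -/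
  hmix : ∀ X : Fin N → EuclideanSpace ℝ (Fin d),
    ∑ j, ‖(∑ i, W i j • X i) - (N : ℝ)⁻¹ • ∑ i, X i‖ ^ 2
      ≤ (1 - p) * ∑ j, ‖X j - (N : ℝ)⁻¹ • ∑ i, X i‖ ^ 2

namespace MTProblem

variable {N d : ℕ} {Ω : Type} [mΩ : MeasurableSpace Ω]

/-- Global objective `f = (1/N) ∑_i f_i`. -/
def F (P : MTProblem N d Ω) (v : EuclideanSpace ℝ (Fin d)) : ℝ :=
  (N : ℝ)⁻¹ * ∑ i, P.f i v

/-- Gradient of the global objective, `∇f = (1/N) ∑_i ∇f_i`. -/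
def gradF (P : MTProblem N d Ω) (v : EuclideanSpace ℝ (Fin d)) : EuclideanSpace ℝ (Fin d) :=
  (N : ℝ)⁻¹ • ∑ i, P.g i v

end MTProblem

/-- A run of the Momentum Tracking algorithm: trajectories `x, u, c`, realized
stochastic gradients `G r i = ∇F_i(x_i^{(r)}; ξ_i^{(r)})`, together with the update
rules, the standard initialization, and the stochastic-gradient assumptions
(unbiasedness, bounded variance, independence across nodes and rounds in the form
of orthogonality of the noises). -/
structure MTRun {N d : ℕ} {Ω : Type} [mΩ : MeasurableSpace Ω] (P : MTProblem N d Ω) where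
  /-- Step size. -/
  η : ℝ
  hη : 0 < η
  x : ℕ → Fin N → Ω → EuclideanSpace ℝ (Fin d)
  u : ℕ → Fin N → Ω → EuclideanSpace ℝ (Fin d)
  c : ℕ → Fin N → Ω → EuclideanSpace ℝ (Fin d)
  G : ℕ → Fin N → Ω → EuclideanSpace ℝ (Fin d)
  /-- Filtration of the information available at each round. -/
  ℱ : MeasureTheory.Filtration ℕ mΩ
  hx0 : ∀ i, x 0 i = fun _ => P.x0
  hu0 : ∀ i ω, u 0 i ω = (1 - P.β)⁻¹ • (G 0 i ω - (N : ℝ)⁻¹ • ∑ j, G 0 j ω)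
  hc0 : ∀ i, c 0 i = u 0 i
  hu : ∀ r i ω, u (r + 1) i ω = P.β • u r i ω + G r i ω
  hx : ∀ r i ω, x (r + 1) i ω
      = (∑ j, P.W i j • x r j ω) - η • (u (r + 1) i ω - c r i ω)
  hc : ∀ r i ω, c (r + 1) i ω
      = (∑ j, P.W i j • (c r j ω - u (r + 1) j ω)) + u (r + 1) i ω
  hmeas : ∀ r i, MemLp (G r i) 2 P.μ
  hadapted_x : ∀ r i, StronglyMeasurable[ℱ r] (x r i)
  hadapted_G : ∀ r i, StronglyMeasurable[ℱ (r + 1)] (G r i)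
  /-- Unbiasedness: `E[∇F_i(x_i^{(r)};ξ) | ℱ_r] = ∇f_i(x_i^{(r)})`. -/
  hunbiased : ∀ r i,
    MeasureTheory.condExp (ℱ r) P.μ (G r i) =ᵐ[P.μ] fun ω => P.g i (x r i ω)
  /-- Bounded variance. -/
  hvar : ∀ r i, ∫ ω, ‖G r i ω - P.g i (x r i ω)‖ ^ 2 ∂P.μ ≤ P.σ ^ 2
  /-- Independence across nodes and rounds (orthogonality of the noises). -/
  horth : ∀ r s : ℕ, ∀ i j : Fin N, (r, i) ≠ (s, j) →
    ∫ ω, (inner ℝ (G r i ω - P.g i (x r i ω)) (G s j ω - P.g j (x s j ω)) : ℝ) ∂P.μ = 0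

namespace MTRun

variable {N d : ℕ} {Ω : Type} [mΩ : MeasurableSpace Ω] {P : MTProblem N d Ω}

/-- Node-average of the parameters, `x̄^{(r)}`. -/
def xbar (S : MTRun P) (r : ℕ) (ω : Ω) : EuclideanSpace ℝ (Fin d) :=
  (N : ℝ)⁻¹ • ∑ i, S.x r i ω

/-- Node-average of the momenta, `ū^{(r)}`. -/
def ubar (S : MTRun P) (r : ℕ) (ω : Ω) : EuclideanSpace ℝ (Fin d) :=
  (N : ℝ)⁻¹ • ∑ i, S.u r i ω

/-- Node-average of the correction variables, `c̄^{(r)}`. -/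
def cbar (S : MTRun P) (r : ℕ) (ω : Ω) : EuclideanSpace ℝ (Fin d) :=
  (N : ℝ)⁻¹ • ∑ i, S.c r i ω

/-- Auxiliary average `z̄^{(r)}`. -/
def zbar (S : MTRun P) : ℕ → Ω → EuclideanSpace ℝ (Fin d)
  | 0 => S.xbar 0
  | r + 1 => fun ω =>
      (1 - P.β)⁻¹ • S.xbar (r + 1) ω - (P.β * (1 - P.β)⁻¹) • S.xbar r ω

/-- Auxiliary sequence `d_i^{(r)}`. -/
def dseq (S : MTRun P) : ℕ → Fin N → Ω → EuclideanSpace ℝ (Fin d)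
  | 0 => fun i ω => (1 - P.β)⁻¹ • (P.g i (S.xbar 0 ω) - P.gradF (S.xbar 0 ω))
  | r + 1 => fun i ω => P.β • dseq S r i ω + P.g i (S.xbar r ω)

/-- Auxiliary sequence `e_i^{(r)}`. -/
def eseq (S : MTRun P) : ℕ → Fin N → Ω → EuclideanSpace ℝ (Fin d)
  | 0 => fun _ _ => 0
  | r + 1 => fun i ω => P.β • eseq S r i ω + P.gradF (S.xbar r ω)

/-- Node-average `d̄^{(r)}`. -/
def dbar (S : MTRun P) (r : ℕ) (ω : Ω) : EuclideanSpace ℝ (Fin d) :=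
  (N : ℝ)⁻¹ • ∑ i, S.dseq r i ω

/-- Node-average `ē^{(r)}`. -/
def ebar (S : MTRun P) (r : ℕ) (ω : Ω) : EuclideanSpace ℝ (Fin d) :=
  (N : ℝ)⁻¹ • ∑ i, S.eseq r i ω

/-- Consensus distance `Ξ^{(r)} = (1/N) E‖X^{(r)} − X̄^{(r)}‖_F²`. -/
def Xi (S : MTRun P) (r : ℕ) : ℝ :=
  (N : ℝ)⁻¹ * ∫ ω, (∑ i, ‖S.x r i ω - S.xbar r ω‖ ^ 2) ∂P.μ

/-- Tracking error `ℰ^{(r)} = (1/N) E‖D^{(r+1)} − C^{(r)} − E^{(r+1)}‖_F²`. -/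
def EE (S : MTRun P) (r : ℕ) : ℝ :=
  (N : ℝ)⁻¹ *
    ∫ ω, (∑ i, ‖S.dseq (r + 1) i ω - S.c r i ω - S.eseq (r + 1) i ω‖ ^ 2) ∂P.μ

/-- Momentum drift `𝒟^{(r)} = (1/N) E‖D^{(r+1)} − D^{(r)} − E^{(r+1)} + E^{(r)}‖_F²`. -/
def DD (S : MTRun P) (r : ℕ) : ℝ :=
  (N : ℝ)⁻¹ *
    ∫ ω, (∑ i,
      ‖S.dseq (r + 1) i ω - S.dseq r i ω - S.eseq (r + 1) i ω + S.eseq r i ω‖ ^ 2) ∂P.μ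

end MTRun

/-! Since the columns of `W` sum to one, gossip averaging leaves node sums unchanged; hence the
correction variables keep the zero sum of their initialization and the averages follow the
heavy-ball recursion `x̄^{(r+1)} = x̄^{(r)} − η ū^{(r+1)}`, `ū^{(r+1)} = β ū^{(r)} + ḡ^{(r)}`.
The sequence `z̄` is the classical change of variables that turns heavy ball into a plain
gradient step: `(1−β)(z̄^{(r+1)} − z̄^{(r)}) = −η (ū^{(r+1)} − β ū^{(r)}) = −η ḡ^{(r)}`. -/

theorem Finset.sum_sum_smul_eq_sum_of_sum_col_eq_one {ι R M : Type*} [Fintype ι] [Semiring R]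
    [AddCommMonoid M] [Module R M] (W : ι → ι → R) (hcol : ∀ j, ∑ i, W i j = 1) (v : ι → M) :
    ∑ i, ∑ j, W i j • v j = ∑ j, v j := by
  rw [Finset.sum_comm]
  simp only [← Finset.sum_smul, hcol, one_smul]

namespace MTRun

variable {N d : ℕ} {Ω : Type} [mΩ : MeasurableSpace Ω] {P : MTProblem N d Ω} (S : MTRun P)

theorem sum_u_zero (ω : Ω) : ∑ i, S.u 0 i ω = 0 := by
  have hN : (N : ℝ) ≠ 0 := Nat.cast_ne_zero.mpr P.hN.ne'
  simp only [S.hu0, ← Finset.smul_sum, Finset.sum_sub_distrib, Finset.sum_const,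
    Finset.card_univ, Fintype.card_fin, ← Nat.cast_smul_eq_nsmul ℝ, smul_smul, inv_mul_cancel₀ hN,
    one_smul, sub_self, smul_zero]

theorem sum_c_eq_zero (r : ℕ) (ω : Ω) : ∑ i, S.c r i ω = 0 := by
  induction r with
  | zero => simp only [S.hc0, sum_u_zero]
  | succ r ih =>
    simp only [S.hc, Finset.sum_add_distrib,
      Finset.sum_sum_smul_eq_sum_of_sum_col_eq_one P.W P.hWcol, Finset.sum_sub_distrib, ih,
      zero_sub, neg_add_cancel]

theorem ubar_zero (ω : Ω) : S.ubar 0 ω = 0 := by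
  rw [ubar, sum_u_zero, smul_zero]

theorem ubar_succ (r : ℕ) (ω : Ω) :
    S.ubar (r + 1) ω = P.β • S.ubar r ω + (N : ℝ)⁻¹ • ∑ i, S.G r i ω := by
  simp only [ubar, S.hu, Finset.sum_add_distrib, smul_add, ← Finset.smul_sum,
    smul_comm (N : ℝ)⁻¹ P.β]

theorem xbar_succ (r : ℕ) (ω : Ω) :
    S.xbar (r + 1) ω = S.xbar r ω - S.η • S.ubar (r + 1) ω := by
  simp only [xbar, ubar, S.hx, Finset.sum_sub_distrib,
    Finset.sum_sum_smul_eq_sum_of_sum_col_eq_one P.W P.hWcol, ← Finset.smul_sum,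
    sum_c_eq_zero, sub_zero, smul_sub, smul_zero, smul_comm (N : ℝ)⁻¹ S.η]

/-- For `r = 0` this uses `ū^{(0)} = 0`. -/
theorem zbar_succ_sub_zbar (r : ℕ) (ω : Ω) :
    S.zbar (r + 1) ω - S.zbar r ω
      = -((S.η * (1 - P.β)⁻¹) • (S.ubar (r + 1) ω - P.β • S.ubar r ω)) := by
  have hβ : (1 : ℝ) - P.β ≠ 0 := sub_ne_zero.mpr P.hβ1.ne'
  cases r with
  | zero =>
    simp only [zbar]
    rw [xbar_succ, ubar_zero]
    match_scalars <;> field_simp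
    ring
  | succ r =>
    simp only [zbar]
    rw [xbar_succ S (r + 1), xbar_succ S r]
    match_scalars <;> field_simp <;> ring

end MTRun

/-- **Lemma** (evolution of the auxiliary average `z̄`): for the Momentum Tracking iterates,
`z̄^{(r+1)} − z̄^{(r)} = −(η/(1−β)) (1/N) ∑ᵢ ∇F_i(x_i^{(r)};ξ_i^{(r)})` for every `r ≥ 0`. -/
theorem zbar_evolution
    (N d : ℕ) (Ω : Type) [mΩ : MeasurableSpace Ω]
    (P : MTProblem N d Ω) (S : MTRun P) :
    ∀ (r : ℕ) (ω : Ω),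
      S.zbar (r + 1) ω - S.zbar r ω
        = -((S.η * (1 - P.β)⁻¹) • ((N : ℝ)⁻¹ • ∑ i, S.G r i ω)) := by
  intro r ω
  rw [S.zbar_succ_sub_zbar, S.ubar_succ, add_sub_cancel_left]

end
end

section
/- (Lemma: one-step bound on the average parameter) Under the lower-bound, mixing, smoothness, and bounded-variance assumptions, for every round r ≥ 0 the Momentum Tracking iterates satisfy E‖x̄^{(r+1)} − x̄^{(r)}‖² ≤ 4L²η² Ξ^{(r)} + 2β²η² E‖ū^{(r)}‖² + 4η² E‖∇f(x̄^{(r)})‖² + σ²η²/N, where Ξ^{(r)} = (1/N) E‖X^{(r)} − X̄^{(r)}‖_F². -/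
open MeasureTheory
open scoped BigOperators

noncomputable section

section Aux

variable {N d : ℕ} {Ω : Type} [mΩ : MeasurableSpace Ω] {P : MTProblem N d Ω}

instance (P : MTProblem N d Ω) : IsProbabilityMeasure P.μ := P.prob

namespace MTRun

/-- Noise at round `r`, node `i`. -/
def nse (S : MTRun P) (r : ℕ) (i : Fin N) (ω : Ω) : EuclideanSpace ℝ (Fin d) :=
  S.G r i ω - P.g i (S.x r i ω)

/-- Predictable part of `ū^{(r+1)}`. -/
def avec (S : MTRun P) (r : ℕ) (ω : Ω) : EuclideanSpace ℝ (Fin d) :=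
  P.β • S.ubar r ω + (N : ℝ)⁻¹ • ∑ i, P.g i (S.x r i ω)

/-- Average noise. -/
def nbar (S : MTRun P) (r : ℕ) (ω : Ω) : EuclideanSpace ℝ (Fin d) :=
  (N : ℝ)⁻¹ • ∑ i, S.nse r i ω

end MTRun

lemma gLip (i : Fin N) : LipschitzWith P.L.toNNReal (P.g i) := by
  apply LipschitzWith.of_dist_le_mul
  intro v w
  rw [dist_eq_norm, dist_eq_norm]
  simpa [Real.coe_toNNReal _ P.hL.le] using P.hsmooth i v w

lemma g_comp_memℒp (i : Fin N) {v : Ω → EuclideanSpace ℝ (Fin d)}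
    (hv : MemLp v 2 P.μ) : MemLp (fun ω => P.g i (v ω)) 2 P.μ := by
  have hφ : LipschitzWith P.L.toNNReal (fun w => P.g i w - P.g i 0) := by
    apply LipschitzWith.of_dist_le_mul
    intro v w
    rw [dist_eq_norm, dist_eq_norm]
    have := P.hsmooth i v w
    simpa [Real.coe_toNNReal _ P.hL.le, sub_sub_sub_cancel_right] using this
  have h0 : (fun w : EuclideanSpace ℝ (Fin d) => P.g i w - P.g i 0) 0 = 0 := by simp
  have h1 : MemLp ((fun w => P.g i w - P.g i 0) ∘ v) 2 P.μ := hφ.comp_memLp h0 hv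
  have h2 := h1.add (memLp_const (μ := P.μ) (p := 2) (P.g i 0))
  have heq : (fun ω => P.g i (v ω))
      = ((fun w => P.g i w - P.g i 0) ∘ v + fun _ => P.g i 0) := by
    funext ω; simp [Function.comp]
  rw [heq]; exact h2


end Aux
section Aux2

variable {N d : ℕ} {Ω : Type} [mΩ : MeasurableSpace Ω] {P : MTProblem N d Ω}

lemma memxuc (S : MTRun P) : ∀ r : ℕ,
    (∀ i, MemLp (S.x r i) 2 P.μ) ∧ (∀ i, MemLp (S.u r i) 2 P.μ)
      ∧ (∀ i, MemLp (S.c r i) 2 P.μ) := by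
  intro r
  induction r with
  | zero =>
    have hu : ∀ i, MemLp (S.u 0 i) 2 P.μ := by
      intro i
      have : S.u 0 i = fun ω =>
          (1 - P.β)⁻¹ • (S.G 0 i ω - (N : ℝ)⁻¹ • ∑ j, S.G 0 j ω) := funext (S.hu0 i)
      rw [this]
      exact (((S.hmeas 0 i).sub ((memLp_finset_sum _
        (fun j _ => S.hmeas 0 j)).const_smul (N : ℝ)⁻¹)).const_smul (1 - P.β)⁻¹)
    refine ⟨fun i => ?_, hu, fun i => ?_⟩
    · rw [S.hx0 i]; exact memLp_const _
    · rw [S.hc0 i]; exact hu i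
  | succ r ih =>
    obtain ⟨hx, hu, hc⟩ := ih
    have hu' : ∀ i, MemLp (S.u (r + 1) i) 2 P.μ := by
      intro i
      have : S.u (r + 1) i = fun ω => P.β • S.u r i ω + S.G r i ω :=
        funext (S.hu r i)
      rw [this]; exact ((hu i).const_smul P.β).add (S.hmeas r i)
    refine ⟨fun i => ?_, hu', fun i => ?_⟩
    · have : S.x (r + 1) i = fun ω =>
          (∑ j, P.W i j • S.x r j ω) - S.η • (S.u (r + 1) i ω - S.c r i ω) :=
        funext (S.hx r i)
      rw [this]
      exact (memLp_finset_sum _ (fun j _ => (hx j).const_smul (P.W i j))).sub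
        (((hu' i).sub (hc i)).const_smul S.η)
    · have : S.c (r + 1) i = fun ω =>
          (∑ j, P.W i j • (S.c r j ω - S.u (r + 1) j ω)) + S.u (r + 1) i ω :=
        funext (S.hc r i)
      rw [this]
      exact (memLp_finset_sum _
        (fun j _ => (((hc j).sub (hu' j))).const_smul (P.W i j))).add (hu' i)

lemma ubar_zero (S : MTRun P) : S.ubar 0 = fun _ => 0 := by
  funext ω
  have hNne : (N : ℝ) ≠ 0 := Nat.cast_ne_zero.mpr P.hN.ne'
  simp only [MTRun.ubar, S.hu0]
  rw [← Finset.smul_sum]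
  have : ∑ i : Fin N, (S.G 0 i ω - (N : ℝ)⁻¹ • ∑ j, S.G 0 j ω)
      = ∑ i : Fin N, S.G 0 i ω - (N : ℝ) • ((N : ℝ)⁻¹ • ∑ j, S.G 0 j ω) := by
    rw [Finset.sum_sub_distrib, Finset.sum_const, Finset.card_univ, Fintype.card_fin,
      ← Nat.cast_smul_eq_nsmul ℝ]
  rw [this, smul_smul (N : ℝ) (N : ℝ)⁻¹, mul_inv_cancel₀ hNne, one_smul, sub_self]
  simp

lemma ubar_succ (S : MTRun P) (r : ℕ) :
    S.ubar (r + 1) = fun ω => P.β • S.ubar r ω + (N : ℝ)⁻¹ • ∑ i, S.G r i ω := by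
  funext ω
  simp only [MTRun.ubar, S.hu, Finset.sum_add_distrib, smul_add, ← Finset.smul_sum,
    smul_comm (N : ℝ)⁻¹ P.β]

lemma cbar_zero (S : MTRun P) : ∀ r : ℕ, S.cbar r = fun _ => 0 := by
  intro r
  induction r with
  | zero =>
    have : S.cbar 0 = S.ubar 0 := by
      funext ω; simp only [MTRun.cbar, MTRun.ubar, S.hc0]
    rw [this, ubar_zero]
  | succ r ih =>
    have key : S.cbar (r + 1) = S.cbar r := by
      funext ω
      simp only [MTRun.cbar, S.hc]
      congr 1
      rw [Finset.sum_add_distrib, Finset.sum_comm]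
      have h1 : ∀ j, ∑ i : Fin N, P.W i j • (S.c r j ω - S.u (r + 1) j ω)
          = S.c r j ω - S.u (r + 1) j ω := by
        intro j
        rw [← Finset.sum_smul, P.hWcol j, one_smul]
      simp only [h1]
      rw [Finset.sum_sub_distrib]
      abel
    rw [key, ih]

end Aux2
section Aux3

variable {N d : ℕ} {Ω : Type} [mΩ : MeasurableSpace Ω] {P : MTProblem N d Ω}

lemma ubar_sm (S : MTRun P) : ∀ r : ℕ, StronglyMeasurable[S.ℱ r] (S.ubar r) := by
  intro r
  induction r with
  | zero =>
    rw [ubar_zero]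
    exact stronglyMeasurable_const
  | succ r ih =>
    rw [ubar_succ]
    exact ((ih.mono (S.ℱ.mono (Nat.le_succ r))).const_smul P.β).add
      ((Finset.stronglyMeasurable_fun_sum _ fun i _ => S.hadapted_G r i).const_smul (N : ℝ)⁻¹)

lemma ubar_memℒp (S : MTRun P) (r : ℕ) : MemLp (S.ubar r) 2 P.μ :=
  (memLp_finset_sum _ fun i _ => (memxuc S r).2.1 i).const_smul (N : ℝ)⁻¹

lemma xbar_memℒp (S : MTRun P) (r : ℕ) : MemLp (S.xbar r) 2 P.μ :=
  (memLp_finset_sum _ fun i _ => (memxuc S r).1 i).const_smul (N : ℝ)⁻¹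

lemma xbar_sm (S : MTRun P) (r : ℕ) : StronglyMeasurable[S.ℱ r] (S.xbar r) :=
  ((Finset.stronglyMeasurable_fun_sum _ fun i _ => S.hadapted_x r i).const_smul (N : ℝ)⁻¹)

lemma avec_sm (S : MTRun P) (r : ℕ) : StronglyMeasurable[S.ℱ r] (S.avec r) :=
  ((ubar_sm S r).const_smul P.β).add
    ((Finset.stronglyMeasurable_fun_sum _ fun i _ =>
      (gLip i).continuous.comp_stronglyMeasurable (S.hadapted_x r i)).const_smul (N : ℝ)⁻¹)

lemma avec_memℒp (S : MTRun P) (r : ℕ) : MemLp (S.avec r) 2 P.μ :=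
  ((ubar_memℒp S r).const_smul P.β).add
    ((memLp_finset_sum _ fun i _ => g_comp_memℒp i ((memxuc S r).1 i)).const_smul (N : ℝ)⁻¹)

lemma nse_memℒp (S : MTRun P) (r : ℕ) (i : Fin N) : MemLp (S.nse r i) 2 P.μ :=
  (S.hmeas r i).sub (g_comp_memℒp i ((memxuc S r).1 i))

lemma nbar_memℒp (S : MTRun P) (r : ℕ) : MemLp (S.nbar r) 2 P.μ :=
  (memLp_finset_sum _ fun i _ => nse_memℒp S r i).const_smul (N : ℝ)⁻¹

/-- One-step identity for the average parameter. -/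
lemma xbar_step (S : MTRun P) (r : ℕ) (ω : Ω) :
    S.xbar (r + 1) ω - S.xbar r ω = -S.η • (S.avec r ω + S.nbar r ω) := by
  have hC : (N : ℝ)⁻¹ • ∑ i, S.c r i ω = 0 := by
    have := congrFun (cbar_zero S r) ω
    simpa [MTRun.cbar] using this
  have h2 : ∀ j, ∑ i : Fin N, P.W i j • S.x r j ω = S.x r j ω := fun j => by
    rw [← Finset.sum_smul, P.hWcol j, one_smul]
  have hsum : ∑ i, S.x (r + 1) i ω
      = ∑ j, S.x r j ω - S.η • (∑ i, S.u (r + 1) i ω - ∑ i, S.c r i ω) := by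
    simp only [S.hx]
    rw [Finset.sum_sub_distrib, Finset.sum_comm]
    simp only [h2]
    rw [← Finset.smul_sum, Finset.sum_sub_distrib]
  have h3 : S.avec r ω + S.nbar r ω = (N : ℝ)⁻¹ • ∑ i, S.u (r + 1) i ω := by
    have h4 := congrFun (ubar_succ S r) ω
    simp only [MTRun.avec, MTRun.nbar, MTRun.nse, MTRun.ubar] at h4 ⊢
    rw [Finset.sum_sub_distrib, smul_sub, h4]
    abel
  simp only [MTRun.xbar]
  rw [hsum, h3]
  have key : (N : ℝ)⁻¹ • (∑ j, S.x r j ω - S.η • (∑ i, S.u (r + 1) i ω - ∑ i, S.c r i ω))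
      - (N : ℝ)⁻¹ • ∑ j, S.x r j ω
      = -S.η • ((N : ℝ)⁻¹ • ∑ i, S.u (r + 1) i ω)
        + S.η • ((N : ℝ)⁻¹ • ∑ i, S.c r i ω) := by
    module
  rw [key, hC, smul_zero, add_zero]

end Aux3
section Aux4

variable {N d : ℕ} {Ω : Type} [mΩ : MeasurableSpace Ω] {P : MTProblem N d Ω}

lemma memℒp_integrable_mul {f g : Ω → ℝ} (hf : MemLp f 2 P.μ) (hg : MemLp g 2 P.μ) :
    Integrable (fun ω => f ω * g ω) P.μ := by
  have h := MeasureTheory.L2.integrable_inner (𝕜 := ℝ) (hf.toLp f) (hg.toLp g)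
  refine h.congr ?_
  filter_upwards [hf.coeFn_toLp, hg.coeFn_toLp] with ω h1 h2
  simp [h1, h2, RCLike.inner_apply, conj_trivial, mul_comm]

lemma memℒp_integrable_inner {f g : Ω → EuclideanSpace ℝ (Fin d)}
    (hf : MemLp f 2 P.μ) (hg : MemLp g 2 P.μ) :
    Integrable (fun ω => (inner ℝ (f ω) (g ω) : ℝ)) P.μ := by
  have h := MeasureTheory.L2.integrable_inner (𝕜 := ℝ) (hf.toLp f) (hg.toLp g)
  refine h.congr ?_
  filter_upwards [hf.coeFn_toLp, hg.coeFn_toLp] with ω h1 h2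
  simp [h1, h2]

lemma condexp_clm_zero (S : MTRun P) (r : ℕ)
    {n : Ω → EuclideanSpace ℝ (Fin d)} (hn : Integrable n P.μ)
    (h : MeasureTheory.condExp (S.ℱ r) P.μ n =ᵐ[P.μ] 0)
    (T : EuclideanSpace ℝ (Fin d) →L[ℝ] ℝ) :
    MeasureTheory.condExp (S.ℱ r) P.μ (fun ω => T (n ω)) =ᵐ[P.μ] 0 := by
  have hm := S.ℱ.le r
  haveI : SigmaFinite (P.μ.trim hm) := by infer_instance
  refine (ae_eq_condExp_of_forall_setIntegral_eq hm (T.integrable_comp hn)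
    (fun s _ _ => (integrable_zero _ _ _).integrableOn)
    (fun s hs hμs => ?_) (StronglyMeasurable.aestronglyMeasurable
      (@stronglyMeasurable_const _ _ (S.ℱ r) _ (0 : ℝ)))).symm
  have h1 : ∫ ω in s, n ω ∂P.μ = 0 := by
    rw [← setIntegral_condExp hm hn hs]
    rw [setIntegral_congr_ae (hm s hs) (h.mono fun ω hω _ => hω)]
    simp
  rw [T.integral_comp_comm hn.integrableOn, h1]
  simp

lemma nse_condexp_zero (S : MTRun P) (r : ℕ) (i : Fin N) :
    MeasureTheory.condExp (S.ℱ r) P.μ (S.nse r i) =ᵐ[P.μ] 0 := by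
  have hm := S.ℱ.le r
  have hG : Integrable (S.G r i) P.μ := (S.hmeas r i).integrable one_le_two
  have hgx : Integrable (fun ω => P.g i (S.x r i ω)) P.μ :=
    (g_comp_memℒp i ((memxuc S r).1 i)).integrable one_le_two
  have hsub := condExp_sub (m := S.ℱ r) (μ := P.μ) hG hgx
  have hfix : MeasureTheory.condExp (S.ℱ r) P.μ (fun ω => P.g i (S.x r i ω))
      = fun ω => P.g i (S.x r i ω) :=
    condExp_of_stronglyMeasurable hm
      ((gLip i).continuous.comp_stronglyMeasurable (S.hadapted_x r i)) hgx
  have : S.nse r i = fun ω => S.G r i ω - P.g i (S.x r i ω) := rfl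
  rw [this]
  refine hsub.trans ?_
  filter_upwards [S.hunbiased r i] with ω hω
  simp only [Pi.sub_apply, hω, hfix, Pi.zero_apply, sub_self]

lemma cross_zero_i (S : MTRun P) (r : ℕ) (i : Fin N) :
    ∫ ω, (inner ℝ (S.avec r ω) (S.nse r i ω) : ℝ) ∂P.μ = 0 := by
  have hm := S.ℱ.le r
  haveI : SigmaFinite (P.μ.trim hm) := by infer_instance
  have hinner : ∀ ω, (inner ℝ (S.avec r ω) (S.nse r i ω) : ℝ)
      = ∑ k, (S.avec r ω k) * (S.nse r i ω k) := by
    intro ω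
    simp [PiLp.inner_apply, RCLike.inner_apply, conj_trivial, mul_comm]
  have hak : ∀ k : Fin d, MemLp (fun ω => S.avec r ω k) 2 P.μ := fun k =>
    (EuclideanSpace.proj k : EuclideanSpace ℝ (Fin d) →L[ℝ] ℝ).comp_memLp' (avec_memℒp S r)
  have hnk : ∀ k : Fin d, MemLp (fun ω => S.nse r i ω k) 2 P.μ := fun k =>
    (EuclideanSpace.proj k : EuclideanSpace ℝ (Fin d) →L[ℝ] ℝ).comp_memLp' (nse_memℒp S r i)
  calc ∫ ω, (inner ℝ (S.avec r ω) (S.nse r i ω) : ℝ) ∂P.μ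
      = ∫ ω, ∑ k, (S.avec r ω k) * (S.nse r i ω k) ∂P.μ := by
        simp_rw [hinner]
    _ = ∑ k, ∫ ω, (S.avec r ω k) * (S.nse r i ω k) ∂P.μ := by
        exact integral_finset_sum _ fun k _ => memℒp_integrable_mul (hak k) (hnk k)
    _ = 0 := by
        refine Finset.sum_eq_zero fun k _ => ?_
        have hint : Integrable (fun ω => (S.avec r ω k) * (S.nse r i ω k)) P.μ :=
          memℒp_integrable_mul (hak k) (hnk k)
        have hsm : StronglyMeasurable[S.ℱ r] (fun ω => S.avec r ω k) :=
          (EuclideanSpace.proj k :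
            EuclideanSpace ℝ (Fin d) →L[ℝ] ℝ).continuous.comp_stronglyMeasurable (avec_sm S r)
        have hcond : MeasureTheory.condExp (S.ℱ r) P.μ (fun ω => S.nse r i ω k)
            =ᵐ[P.μ] 0 := by
          have := condexp_clm_zero S r ((nse_memℒp S r i).integrable one_le_two)
            (nse_condexp_zero S r i) (EuclideanSpace.proj k)
          simpa using this
        have hmul := condExp_mul_of_stronglyMeasurable_left (μ := P.μ) hsm
          (by exact hint) ((hnk k).integrable one_le_two)
        calc ∫ ω, (S.avec r ω k) * (S.nse r i ω k) ∂P.μ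
            = ∫ ω, MeasureTheory.condExp (S.ℱ r) P.μ
                ((fun ω => S.avec r ω k) * (fun ω => S.nse r i ω k)) ω ∂P.μ := by
              rw [integral_condExp hm]
              rfl
          _ = 0 := by
              rw [integral_congr_ae (hmul.trans ?_), integral_zero]
              filter_upwards [hcond] with ω hω
              simp [hω]

lemma cross_zero (S : MTRun P) (r : ℕ) :
    ∫ ω, (inner ℝ (S.avec r ω) (S.nbar r ω) : ℝ) ∂P.μ = 0 := by
  have hexp : ∀ ω, (inner ℝ (S.avec r ω) (S.nbar r ω) : ℝ)
      = (N : ℝ)⁻¹ * ∑ i, (inner ℝ (S.avec r ω) (S.nse r i ω) : ℝ) := by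
    intro ω
    simp only [MTRun.nbar, real_inner_smul_right, inner_sum]
  simp_rw [hexp]
  rw [integral_const_mul, integral_finset_sum _
    (fun i _ => memℒp_integrable_inner (avec_memℒp S r) (nse_memℒp S r i))]
  rw [Finset.sum_eq_zero fun i _ => cross_zero_i S r i, mul_zero]

end Aux4
section Aux5

variable {N d : ℕ} {Ω : Type} [mΩ : MeasurableSpace Ω] {P : MTProblem N d Ω}

lemma int_sq {f : Ω → EuclideanSpace ℝ (Fin d)} (hf : MemLp f 2 P.μ) :
    Integrable (fun ω => ‖f ω‖ ^ 2) P.μ :=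
  (memLp_two_iff_integrable_sq_norm hf.aestronglyMeasurable).mp hf

lemma nbar_var (S : MTRun P) (r : ℕ) :
    ∫ ω, ‖S.nbar r ω‖ ^ 2 ∂P.μ ≤ P.σ ^ 2 / N := by
  have hN0 : (0:ℝ) < (N:ℝ) := by exact_mod_cast P.hN
  have hpt : ∀ ω, ‖S.nbar r ω‖ ^ 2
      = ((N : ℝ)⁻¹) ^ 2 * ∑ i, ∑ j, (inner ℝ (S.nse r i ω) (S.nse r j ω) : ℝ) := by
    intro ω
    have h1 : ‖S.nbar r ω‖ = (N : ℝ)⁻¹ * ‖∑ i, S.nse r i ω‖ := by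
      show ‖(N : ℝ)⁻¹ • ∑ i, S.nse r i ω‖ = _
      rw [norm_smul, Real.norm_eq_abs, abs_of_nonneg (by positivity)]
    rw [h1, mul_pow]
    congr 1
    rw [← real_inner_self_eq_norm_sq, sum_inner]
    exact Finset.sum_congr rfl fun i _ => inner_sum _ _ _
  have hint : ∀ i j, Integrable
      (fun ω => (inner ℝ (S.nse r i ω) (S.nse r j ω) : ℝ)) P.μ := fun i j =>
    memℒp_integrable_inner (nse_memℒp S r i) (nse_memℒp S r j)
  calc ∫ ω, ‖S.nbar r ω‖ ^ 2 ∂P.μ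
      = ((N : ℝ)⁻¹) ^ 2 * ∫ ω, ∑ i, ∑ j,
          (inner ℝ (S.nse r i ω) (S.nse r j ω) : ℝ) ∂P.μ := by
        simp_rw [hpt]; rw [integral_const_mul]
    _ = ((N : ℝ)⁻¹) ^ 2 * ∑ i, ∑ j, ∫ ω,
          (inner ℝ (S.nse r i ω) (S.nse r j ω) : ℝ) ∂P.μ := by
        congr 1
        rw [integral_finset_sum _ fun i _ => integrable_finset_sum _ fun j _ => hint i j]
        exact Finset.sum_congr rfl fun i _ => integral_finset_sum _ fun j _ => hint i j
    _ = ((N : ℝ)⁻¹) ^ 2 * ∑ i : Fin N, ∫ ω,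
          (inner ℝ (S.nse r i ω) (S.nse r i ω) : ℝ) ∂P.μ := by
        congr 1
        refine Finset.sum_congr rfl fun i _ => ?_
        refine Finset.sum_eq_single i (fun j _ hji => ?_) (by simp)
        have hne : ((r, i) : ℕ × Fin N) ≠ (r, j) :=
          fun h => hji (congrArg Prod.snd h).symm
        have := S.horth r r i j hne
        simpa [MTRun.nse] using this
    _ ≤ ((N : ℝ)⁻¹) ^ 2 * ∑ i : Fin N, P.σ ^ 2 := by
        refine mul_le_mul_of_nonneg_left (Finset.sum_le_sum fun i _ => ?_) (by positivity)
        have hv := S.hvar r i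
        have : ∫ ω, (inner ℝ (S.nse r i ω) (S.nse r i ω) : ℝ) ∂P.μ
            = ∫ ω, ‖S.G r i ω - P.g i (S.x r i ω)‖ ^ 2 ∂P.μ := by
          refine integral_congr_ae (Filter.Eventually.of_forall fun ω => ?_)
          show (inner ℝ (S.nse r i ω) (S.nse r i ω) : ℝ)
            = ‖S.G r i ω - P.g i (S.x r i ω)‖ ^ 2
          rw [real_inner_self_eq_norm_sq]; rfl
        rw [this]; exact hv
    _ = P.σ ^ 2 / N := by
        rw [Finset.sum_const, Finset.card_univ, Fintype.card_fin, nsmul_eq_mul]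
        field_simp

lemma avec_pt (S : MTRun P) (r : ℕ) (ω : Ω) :
    ‖S.avec r ω‖ ^ 2 ≤ 2 * P.β ^ 2 * ‖S.ubar r ω‖ ^ 2
      + 4 * ‖P.gradF (S.xbar r ω)‖ ^ 2
      + 4 * P.L ^ 2 * ((N : ℝ)⁻¹ * ∑ i, ‖S.x r i ω - S.xbar r ω‖ ^ 2) := by
  have hN0 : (0:ℝ) < (N:ℝ) := by exact_mod_cast P.hN
  set q := P.β • S.ubar r ω with hqdef
  set w := P.gradF (S.xbar r ω) with hwdef
  set Δ := (N : ℝ)⁻¹ • ∑ i, (P.g i (S.x r i ω) - P.g i (S.xbar r ω)) with hΔdef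
  have hsplit : S.avec r ω = q + (w + Δ) := by
    simp only [MTRun.avec, MTProblem.gradF, hqdef, hwdef, hΔdef]
    rw [Finset.sum_sub_distrib, smul_sub]
    abel
  have hq : ‖q‖ ^ 2 = P.β ^ 2 * ‖S.ubar r ω‖ ^ 2 := by
    rw [hqdef, norm_smul, mul_pow, Real.norm_eq_abs, sq_abs]
  have hΔn : ‖Δ‖ ≤ (N : ℝ)⁻¹ * ∑ i, P.L * ‖S.x r i ω - S.xbar r ω‖ := by
    rw [hΔdef, norm_smul, Real.norm_eq_abs, abs_of_nonneg (by positivity)]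
    refine mul_le_mul_of_nonneg_left ?_ (by positivity)
    exact (norm_sum_le _ _).trans (Finset.sum_le_sum fun i _ => P.hsmooth i _ _)
  have hΔsq : ‖Δ‖ ^ 2 ≤ P.L ^ 2 * ((N : ℝ)⁻¹ * ∑ i, ‖S.x r i ω - S.xbar r ω‖ ^ 2) := by
    have h2 : (∑ i, P.L * ‖S.x r i ω - S.xbar r ω‖) ^ 2
        ≤ (N : ℝ) * ∑ i, (P.L * ‖S.x r i ω - S.xbar r ω‖) ^ 2 := by
      have h0 := sq_sum_le_card_mul_sum_sq (s := (Finset.univ : Finset (Fin N)))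
        (f := fun i => P.L * ‖S.x r i ω - S.xbar r ω‖)
      rw [Finset.card_univ, Fintype.card_fin] at h0
      exact h0
    have h3 : ‖Δ‖ ^ 2 ≤ ((N : ℝ)⁻¹ * ∑ i, P.L * ‖S.x r i ω - S.xbar r ω‖) ^ 2 :=
      pow_le_pow_left₀ (norm_nonneg _) hΔn 2
    rw [mul_pow] at h3
    have h2' : (∑ i, P.L * ‖S.x r i ω - S.xbar r ω‖) ^ 2
        ≤ (N : ℝ) * (P.L ^ 2 * ∑ i, ‖S.x r i ω - S.xbar r ω‖ ^ 2) := by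
      refine h2.trans (le_of_eq ?_)
      congr 1
      rw [Finset.mul_sum]
      exact Finset.sum_congr rfl fun i _ => by ring
    clear h2
    calc ‖Δ‖ ^ 2 ≤ ((N:ℝ)⁻¹) ^ 2 * (∑ i, P.L * ‖S.x r i ω - S.xbar r ω‖) ^ 2 := h3
      _ ≤ ((N:ℝ)⁻¹) ^ 2 * ((N:ℝ) * (P.L ^ 2 * ∑ i, ‖S.x r i ω - S.xbar r ω‖ ^ 2)) :=
          mul_le_mul_of_nonneg_left h2' (by positivity)
      _ = P.L ^ 2 * ((N : ℝ)⁻¹ * ∑ i, ‖S.x r i ω - S.xbar r ω‖ ^ 2) := by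
          field_simp
  have hmain : ‖q + (w + Δ)‖ ^ 2 ≤ 2 * ‖q‖ ^ 2 + 4 * ‖w‖ ^ 2 + 4 * ‖Δ‖ ^ 2 := by
    have n1 := norm_add_le q (w + Δ)
    have n2 := norm_add_le w Δ
    have e1 : ‖q + (w + Δ)‖ ^ 2 ≤ (‖q‖ + ‖w + Δ‖) ^ 2 :=
      pow_le_pow_left₀ (norm_nonneg _) n1 2
    have e2 : ‖w + Δ‖ ^ 2 ≤ (‖w‖ + ‖Δ‖) ^ 2 :=
      pow_le_pow_left₀ (norm_nonneg _) n2 2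
    nlinarith [e1, e2, sq_nonneg (‖q‖ - ‖w + Δ‖), sq_nonneg (‖w‖ - ‖Δ‖)]
  rw [hsplit]
  rw [hq] at hmain
  linarith [hmain, hΔsq]

lemma gradF_memℒp (S : MTRun P) (r : ℕ) :
    MemLp (fun ω => P.gradF (S.xbar r ω)) 2 P.μ := by
  have : (fun ω => P.gradF (S.xbar r ω))
      = fun ω => (N : ℝ)⁻¹ • ∑ i, P.g i (S.xbar r ω) := by
    funext ω; rfl
  rw [this]
  exact (memLp_finset_sum _ fun i _ => g_comp_memℒp i (xbar_memℒp S r)).const_smul (N : ℝ)⁻¹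

lemma avec_bound (S : MTRun P) (r : ℕ) :
    ∫ ω, ‖S.avec r ω‖ ^ 2 ∂P.μ ≤
      2 * P.β ^ 2 * (∫ ω, ‖S.ubar r ω‖ ^ 2 ∂P.μ)
      + 4 * ∫ ω, ‖P.gradF (S.xbar r ω)‖ ^ 2 ∂P.μ
      + 4 * P.L ^ 2 * S.Xi r := by
  have hI1 : Integrable (fun ω => ‖S.ubar r ω‖ ^ 2) P.μ := int_sq (ubar_memℒp S r)
  have hI2 : Integrable (fun ω => ‖P.gradF (S.xbar r ω)‖ ^ 2) P.μ :=
    int_sq (gradF_memℒp S r)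
  have hI3 : Integrable (fun ω => ∑ i, ‖S.x r i ω - S.xbar r ω‖ ^ 2) P.μ :=
    integrable_finset_sum _ fun i _ => int_sq (((memxuc S r).1 i).sub (xbar_memℒp S r))
  have hle : ∫ ω, ‖S.avec r ω‖ ^ 2 ∂P.μ
      ≤ ∫ ω, (2 * P.β ^ 2 * ‖S.ubar r ω‖ ^ 2
        + 4 * ‖P.gradF (S.xbar r ω)‖ ^ 2
        + 4 * P.L ^ 2 * ((N : ℝ)⁻¹ * ∑ i, ‖S.x r i ω - S.xbar r ω‖ ^ 2)) ∂P.μ := by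
    refine integral_mono (int_sq (avec_memℒp S r)) ?_ (fun ω => avec_pt S r ω)
    exact ((hI1.const_mul _).add (hI2.const_mul _)).add ((hI3.const_mul _).const_mul _)
  refine hle.trans (le_of_eq ?_)
  have hA : Integrable (fun ω => 2 * P.β ^ 2 * ‖S.ubar r ω‖ ^ 2
      + 4 * ‖P.gradF (S.xbar r ω)‖ ^ 2) P.μ := (hI1.const_mul _).add (hI2.const_mul _)
  have hB : Integrable (fun ω =>
      4 * P.L ^ 2 * ((N : ℝ)⁻¹ * ∑ i, ‖S.x r i ω - S.xbar r ω‖ ^ 2)) P.μ :=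
    (hI3.const_mul _).const_mul _
  have hA1 : Integrable (fun ω => 2 * P.β ^ 2 * ‖S.ubar r ω‖ ^ 2) P.μ := hI1.const_mul _
  have hA2 : Integrable (fun ω => 4 * ‖P.gradF (S.xbar r ω)‖ ^ 2) P.μ := hI2.const_mul _
  rw [integral_add hA hB, integral_add hA1 hA2,
    integral_const_mul, integral_const_mul, integral_const_mul, integral_const_mul]
  simp only [MTRun.Xi]

end Aux5
section Aux6

variable {N d : ℕ} {Ω : Type} [mΩ : MeasurableSpace Ω] {P : MTProblem N d Ω}

lemma step_expand (S : MTRun P) (r : ℕ) :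
    ∫ ω, ‖S.xbar (r + 1) ω - S.xbar r ω‖ ^ 2 ∂P.μ
      = S.η ^ 2 * (∫ ω, ‖S.avec r ω‖ ^ 2 ∂P.μ)
        + S.η ^ 2 * ∫ ω, ‖S.nbar r ω‖ ^ 2 ∂P.μ := by
  have hpt : ∀ ω, ‖S.xbar (r + 1) ω - S.xbar r ω‖ ^ 2
      = S.η ^ 2 * (‖S.avec r ω‖ ^ 2
          + 2 * (inner ℝ (S.avec r ω) (S.nbar r ω) : ℝ) + ‖S.nbar r ω‖ ^ 2) := by
    intro ω
    rw [xbar_step S r ω, norm_smul, Real.norm_eq_abs, mul_pow, sq_abs, neg_sq,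
      norm_add_sq_real]
  have hIa : Integrable (fun ω => ‖S.avec r ω‖ ^ 2) P.μ := int_sq (avec_memℒp S r)
  have hIn : Integrable (fun ω => ‖S.nbar r ω‖ ^ 2) P.μ := int_sq (nbar_memℒp S r)
  have hIc : Integrable (fun ω => 2 * (inner ℝ (S.avec r ω) (S.nbar r ω) : ℝ)) P.μ :=
    (memℒp_integrable_inner (avec_memℒp S r) (nbar_memℒp S r)).const_mul 2
  have hA : Integrable (fun ω => ‖S.avec r ω‖ ^ 2
      + 2 * (inner ℝ (S.avec r ω) (S.nbar r ω) : ℝ)) P.μ := hIa.add hIc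
  simp_rw [hpt]
  rw [integral_const_mul, integral_add hA hIn, integral_add hIa hIc,
    integral_const_mul, cross_zero S r]
  ring

end Aux6
/-- **Lemma** (one-step bound on the average parameter): for every round `r ≥ 0`,
`E‖x̄^{(r+1)} − x̄^{(r)}‖² ≤ 4L²η² Ξ^{(r)} + 2β²η² E‖ū^{(r)}‖² + 4η² E‖∇f(x̄^{(r)})‖² + σ²η²/N`. -/
theorem xbar_one_step_bound
    (N d : ℕ) (Ω : Type) [mΩ : MeasurableSpace Ω]
    (P : MTProblem N d Ω) (S : MTRun P) :
    ∀ r : ℕ,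
      ∫ ω, ‖S.xbar (r + 1) ω - S.xbar r ω‖ ^ 2 ∂P.μ ≤
        4 * P.L ^ 2 * S.η ^ 2 * S.Xi r
          + 2 * P.β ^ 2 * S.η ^ 2 * ∫ ω, ‖S.ubar r ω‖ ^ 2 ∂P.μ
          + 4 * S.η ^ 2 * ∫ ω, ‖P.gradF (S.xbar r ω)‖ ^ 2 ∂P.μ
          + P.σ ^ 2 * S.η ^ 2 / N := by
  intro r
  have h1 := step_expand S r
  have h2 := avec_bound S r
  have h3 := nbar_var S r
  have hη2 : (0:ℝ) ≤ S.η ^ 2 := sq_nonneg _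
  rw [h1]
  have b1 := mul_le_mul_of_nonneg_left h2 hη2
  have b2 := mul_le_mul_of_nonneg_left h3 hη2
  refine (add_le_add b1 b2).trans (le_of_eq ?_)
  ring

end
end
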